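/- arXiv:2507.13818 — 5 statements merged into one kernel-verified Lean document; each statement's English description precedes it below -/
import Mathlib

section
/- Let G be a tripartite graph with tripartition V = A ∪ B ∪ C (A, B, C nonempty independent sets) and let ℓ ≥ vc(G) be a positive integer. Form H from G by adding three ℓ-vertex cliques K_A, K_B, K_C and three new vertices z_A, z_B, z_C, and for each X ∈ {A, B, C} adding all edges between K_X and X ∪ {z_X}. Then td(H) = vc(G) + ℓ + 1. -/
open scoped Classical

universe u

/-- A rooted forest on the vertex set of `G` in which every edge of `G` joins two vertices
in ancestor--descendant relationship, presented via its ancestor relation `anc`: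
`anc u v` means that `u` is an ancestor of `v` (every vertex is its own ancestor).
The ancestors of each vertex form a chain, which makes the order a forest order. -/
structure ElimForest {V : Type u} (G : SimpleGraph V) where
  anc : V → V → Prop
  refl : ∀ v, anc v v
  antisymm : ∀ u v, anc u v → anc v u → u = v
  trans : ∀ u v w, anc u v → anc v w → anc u w
  ancTotal : ∀ u v w, anc u w → anc v w → anc u v ∨ anc v u
  adjComparable : ∀ u v, G.Adj u v → anc u v ∨ anc v u

/-- The depth of a rooted forest: the number of vertices on a longest root-to-leaf path,
i.e. the maximum number of ancestors of a vertex. -/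
noncomputable def ElimForest.depth {V : Type u} [Fintype V] {G : SimpleGraph V}
    (F : ElimForest G) : ℕ :=
  Finset.univ.sup fun v : V => {u | F.anc u v}.ncard

/-- The treedepth of `G`: the minimum depth of an elimination forest of `G`. -/
noncomputable def treedepth (V : Type u) [Fintype V] (G : SimpleGraph V) : ℕ :=
  sInf {n | ∃ F : ElimForest G, F.depth = n}

/-- `S` is a vertex cover of `G`: every edge of `G` has an endpoint in `S`. -/
def IsVertexCover {V : Type u} (G : SimpleGraph V) (S : Set V) : Prop :=
  ∀ ⦃u v : V⦄, G.Adj u v → u ∈ S ∨ v ∈ S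

/-- The vertex cover number of `G`. -/
noncomputable def vcNum (V : Type u) [Fintype V] (G : SimpleGraph V) : ℕ :=
  sInf {n | ∃ S : Finset V, IsVertexCover G ↑S ∧ S.card = n}

/-- The vertex set of the clique-augmented graph: the original vertices, three cliques of
size `ℓ` (one per part), and three apex vertices (one per part). -/
abbrev AugV (V₀ : Type u) (ℓ : ℕ) : Type u := V₀ ⊕ ((Fin 3 × Fin ℓ) ⊕ Fin 3)

/-- Underlying relation of the clique-augmented graph: edges of `G`, plus for each part
`i` a clique `K_i` of size `ℓ` joined completely to the part `i` and to the apex `z_i`. -/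
def augRel {V₀ : Type u} (G : SimpleGraph V₀) (P : V₀ → Fin 3) (ℓ : ℕ) :
    AugV V₀ ℓ → AugV V₀ ℓ → Prop
  | Sum.inl u, Sum.inl v => G.Adj u v
  | Sum.inl u, Sum.inr (Sum.inl (i, _)) => P u = i
  | Sum.inr (Sum.inl (i, _)), Sum.inr (Sum.inl (j, _)) => i = j
  | Sum.inr (Sum.inl (i, _)), Sum.inr (Sum.inr j) => i = j
  | _, _ => False

/-- The clique-augmented graph `H` built from a tripartite graph `G` with tripartition
given by `P` and parameter `ℓ`. -/
def augGraph {V₀ : Type u} (G : SimpleGraph V₀) (P : V₀ → Fin 3) (ℓ : ℕ) :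
    SimpleGraph (AugV V₀ ℓ) :=
  SimpleGraph.fromRel (augRel G P ℓ)

namespace TDAux

/-- clique vertex -/
abbrev kap (V₀ : Type u) (ℓ : ℕ) (i : Fin 3) (t : Fin ℓ) : AugV V₀ ℓ :=
  Sum.inr (Sum.inl (i, t))

/-- apex vertex -/
abbrev zet (V₀ : Type u) (ℓ : ℕ) (i : Fin 3) : AugV V₀ ℓ :=
  Sum.inr (Sum.inr i)

variable {V₀ : Type u} {G : SimpleGraph V₀} {P : V₀ → Fin 3} {ℓ : ℕ}

lemma adj_inl_inl {u v : V₀} :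
    (augGraph G P ℓ).Adj (Sum.inl u) (Sum.inl v) ↔ G.Adj u v := by
  constructor
  · rintro ⟨-, h | h⟩
    · exact h
    · exact h.symm
  · intro h
    exact ⟨by simp [h.ne], Or.inl h⟩

lemma adj_inl_kap {u : V₀} {i : Fin 3} {t : Fin ℓ} :
    (augGraph G P ℓ).Adj (Sum.inl u) (kap V₀ ℓ i t) ↔ P u = i := by
  constructor
  · rintro ⟨-, h | h⟩
    · exact h
    · exact h.elim
  · intro h
    exact ⟨by simp, Or.inl h⟩

lemma adj_kap_kap {i j : Fin 3} {s t : Fin ℓ} :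
    (augGraph G P ℓ).Adj (kap V₀ ℓ i s) (kap V₀ ℓ j t) ↔ i = j ∧ (i, s) ≠ (j, t) := by
  constructor
  · rintro ⟨hne, h | h⟩
    · exact ⟨h, by simpa using hne⟩
    · exact ⟨h.symm, by simpa using hne⟩
  · rintro ⟨h1, h2⟩
    exact ⟨by simpa using h2, Or.inl h1⟩

lemma adj_kap_zet {i j : Fin 3} {t : Fin ℓ} :
    (augGraph G P ℓ).Adj (kap V₀ ℓ i t) (zet V₀ ℓ j) ↔ i = j := by
  constructor
  · rintro ⟨-, h | h⟩
    · exact h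
    · exact h.elim
  · intro h
    exact ⟨by simp, Or.inl h⟩

lemma exists_chain_bot {α : Type*} (r : α → α → Prop)
    (htr : ∀ a b c, r a b → r b c → r a c) (s : Finset α) (hs : s.Nonempty)
    (htot : ∀ a ∈ s, ∀ b ∈ s, r a b ∨ r b a) : ∃ b ∈ s, ∀ a ∈ s, r a b := by
  classical
  revert hs htot
  induction s using Finset.induction_on with
  | empty => intro hs _; simp at hs
  | insert a s ha ih =>
    intro hs htot
    rcases s.eq_empty_or_nonempty with rfl | hs'
    · refine ⟨a, by simp, ?_⟩
      intro x hx
      have hxa : x = a := by simpa using hx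
      rw [hxa]
      rcases htot a (by simp) a (by simp) with h | h <;> exact h
    · obtain ⟨b, hb, hball⟩ := ih hs'
        (fun x hx y hy => htot x (Finset.mem_insert_of_mem hx) y (Finset.mem_insert_of_mem hy))
      rcases htot a (Finset.mem_insert_self _ _) b (Finset.mem_insert_of_mem hb) with h | h
      · refine ⟨b, Finset.mem_insert_of_mem hb, fun x hx => ?_⟩
        rcases Finset.mem_insert.1 hx with rfl | hx'
        · exact h
        · exact hball x hx'
      · refine ⟨a, Finset.mem_insert_self _ _, fun x hx => ?_⟩
        rcases Finset.mem_insert.1 hx with rfl | hx'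
        · rcases htot x (Finset.mem_insert_self _ _) x (Finset.mem_insert_self _ _) with h' | h' <;>
            exact h'
        · exact htr x b a (hball x hx') h

noncomputable def Kfin (V₀ : Type u) (ℓ : ℕ) (i : Fin 3) : Finset (AugV V₀ ℓ) :=
  Finset.univ.image (fun t : Fin ℓ => kap V₀ ℓ i t)

noncomputable def Qfin (V₀ : Type u) (ℓ : ℕ) (i : Fin 3) : Finset (AugV V₀ ℓ) :=
  insert (zet V₀ ℓ i) (Kfin V₀ ℓ i)

lemma mem_Kfin {i : Fin 3} {x : AugV V₀ ℓ} :
    x ∈ Kfin V₀ ℓ i ↔ ∃ t : Fin ℓ, x = kap V₀ ℓ i t := by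
  simp [Kfin, eq_comm]

lemma card_Kfin (i : Fin 3) : (Kfin V₀ ℓ i).card = ℓ := by
  rw [Kfin, Finset.card_image_of_injective _ (fun a b h => by simpa using h)]
  simp

lemma zet_not_mem_Kfin {i j : Fin 3} : zet V₀ ℓ i ∉ Kfin V₀ ℓ j := by
  simp [mem_Kfin]

lemma inl_not_mem_Kfin {u : V₀} {j : Fin 3} : (Sum.inl u : AugV V₀ ℓ) ∉ Kfin V₀ ℓ j := by
  simp [mem_Kfin]

lemma inl_not_mem_Qfin {u : V₀} {j : Fin 3} : (Sum.inl u : AugV V₀ ℓ) ∉ Qfin V₀ ℓ j := by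
  simp [Qfin, mem_Kfin]

lemma card_Qfin (i : Fin 3) : (Qfin V₀ ℓ i).card = ℓ + 1 := by
  rw [Qfin, Finset.card_insert_of_notMem zet_not_mem_Kfin, card_Kfin]

lemma kap_mem_Qfin {i : Fin 3} {t : Fin ℓ} : kap V₀ ℓ i t ∈ Qfin V₀ ℓ i := by
  simp [Qfin, mem_Kfin]

lemma disj_Kfin {i j : Fin 3} (hij : i ≠ j) : Disjoint (Kfin V₀ ℓ i) (Qfin V₀ ℓ j) := by
  rw [Finset.disjoint_left]
  intro x hx hx'
  rw [mem_Kfin] at hx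
  obtain ⟨t, rfl⟩ := hx
  simp only [Qfin, Finset.mem_insert, mem_Kfin] at hx'
  rcases hx' with h | ⟨s, h⟩
  · exact absurd h (by simp)
  · simp only [kap, Sum.inr.injEq, Sum.inl.injEq, Prod.mk.injEq] at h
    exact hij h.1

lemma lowerBound [Fintype V₀] (G : SimpleGraph V₀) (P : V₀ → Fin 3) (ℓ : ℕ)
    (htri : ∀ u v : V₀, G.Adj u v → P u ≠ P v) (hl : 1 ≤ ℓ)
    (hvc : vcNum V₀ G ≤ ℓ) (F : ElimForest (augGraph G P ℓ)) :
    vcNum V₀ G + ℓ + 1 ≤ F.depth := by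
  by_contra hcon
  push_neg at hcon
  set k := vcNum V₀ G with hk
  -- any set of common ancestors is small
  have hsz : ∀ (v : AugV V₀ ℓ) (T : Finset (AugV V₀ ℓ)),
      (∀ x ∈ T, F.anc x v) → T.card ≤ k + ℓ := by
    intro v T hT
    have h1 : (↑T : Set (AugV V₀ ℓ)).ncard ≤ {u | F.anc u v}.ncard :=
      Set.ncard_le_ncard (fun x hx => hT x (by exact_mod_cast hx)) (Set.toFinite _)
    have h2 : {u | F.anc u v}.ncard ≤ F.depth := by
      rw [ElimForest.depth]
      exact Finset.le_sup (f := fun v : AugV V₀ ℓ => {u | F.anc u v}.ncard)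
        (Finset.mem_univ v)
    rw [Set.ncard_coe_finset] at h1
    omega
  -- bottoms of the clique+apex chains
  have hQbot : ∀ i : Fin 3, ∃ b ∈ Qfin V₀ ℓ i, ∀ a ∈ Qfin V₀ ℓ i, F.anc a b := by
    intro i
    apply exists_chain_bot _ (F.trans) _ ⟨zet V₀ ℓ i, Finset.mem_insert_self _ _⟩
    intro a ha b hb
    simp only [Qfin, Finset.mem_insert, mem_Kfin] at ha hb
    rcases ha with rfl | ⟨s, rfl⟩ <;> rcases hb with rfl | ⟨t, rfl⟩
    · left; exact F.refl _
    · exact (F.adjComparable _ _ (adj_kap_zet.2 rfl)).symm.imp id id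
    · exact F.adjComparable _ _ (adj_kap_zet.2 rfl)
    · by_cases hst : s = t
      · left; rw [hst]; exact F.refl _
      · exact F.adjComparable _ _ (adj_kap_kap.2 ⟨rfl, by simp [hst]⟩)
  choose bQ hbQmem hbQ using hQbot
  -- reaching the bottom from a clique vertex
  have hκb : ∀ (i : Fin 3) (t : Fin ℓ) (x : AugV V₀ ℓ),
      F.anc x (kap V₀ ℓ i t) → F.anc x (bQ i) :=
    fun i t x h => F.trans _ _ _ h (hbQ i _ kap_mem_Qfin)
  -- the "covered" vertices
  set S : V₀ → Prop := fun u => ∃ t : Fin ℓ, F.anc (Sum.inl u) (kap V₀ ℓ (P u) t) with hSdef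
  have hS_b : ∀ u, S u → F.anc (Sum.inl u) (bQ (P u)) := by
    rintro u ⟨t, ht⟩; exact hκb _ t _ ht
  have hnS : ∀ u, ¬ S u → ∀ t : Fin ℓ, F.anc (kap V₀ ℓ (P u) t) (Sum.inl u) := by
    intro u hu t
    rcases F.adjComparable _ _ (adj_inl_kap.2 rfl :
        (augGraph G P ℓ).Adj (Sum.inl u) (kap V₀ ℓ (P u) t)) with h | h
    · exact absurd ⟨t, h⟩ hu
    · exact h
  -- mixed case
  have mixed : ∀ u v, G.Adj u v → S u → ¬ S v → F.anc (Sum.inl u) (bQ (P v)) := by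
    intro u v huv hu hv
    have hij : P u ≠ P v := htri u v huv
    have hanc_uv : F.anc (Sum.inl u) (Sum.inl v) := by
      rcases F.adjComparable _ _ (adj_inl_inl.2 huv) with h | h
      · exact h
      · exfalso
        have hsub : ∀ x ∈ Kfin V₀ ℓ (P v) ∪
            insert (Sum.inl u) (insert (Sum.inl v) (Qfin V₀ ℓ (P u))),
            F.anc x (bQ (P u)) := by
          intro x hx
          simp only [Finset.mem_union, Finset.mem_insert, mem_Kfin] at hx
          have hub : F.anc (Sum.inl u) (bQ (P u)) := hS_b u hu
          rcases hx with ⟨t, rfl⟩ | rfl | rfl | hx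
          · exact F.trans _ _ _ (F.trans _ _ _ (hnS v hv t) h) hub
          · exact hub
          · exact F.trans _ _ _ h hub
          · exact hbQ _ _ hx
        have hcard := hsz _ _ hsub
        rw [Finset.card_union_of_disjoint, Finset.card_insert_of_notMem,
          Finset.card_insert_of_notMem, card_Kfin, card_Qfin] at hcard
        · omega
        · exact inl_not_mem_Qfin
        · simp only [Finset.mem_insert, inl_not_mem_Qfin, or_false, Sum.inl.injEq]
          exact huv.ne
        · apply Finset.disjoint_left.2
          intro x hx hx'
          rw [mem_Kfin] at hx
          obtain ⟨t, rfl⟩ := hx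
          simp only [Finset.mem_insert, mem_Kfin, Qfin] at hx'
          rcases hx' with h' | h' | h' | ⟨s, h'⟩
          · exact absurd h' (by simp)
          · exact absurd h' (by simp)
          · exact absurd h' (by simp)
          · simp only [kap, Sum.inr.injEq, Sum.inl.injEq, Prod.mk.injEq] at h'
            exact hij h'.1.symm
    by_cases hex : ∃ t : Fin ℓ, F.anc (Sum.inl u) (kap V₀ ℓ (P v) t)
    · obtain ⟨t, ht⟩ := hex
      exact hκb _ t _ ht
    · exfalso
      push_neg at hex
      have hall : ∀ t : Fin ℓ, F.anc (kap V₀ ℓ (P v) t) (Sum.inl u) := by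
        intro t
        rcases F.ancTotal _ _ _ hanc_uv (hnS v hv t) with h | h
        · exact absurd h (hex t)
        · exact h
      have hsub : ∀ x ∈ Kfin V₀ ℓ (P v) ∪ insert (Sum.inl u) (Qfin V₀ ℓ (P u)),
          F.anc x (bQ (P u)) := by
        intro x hx
        simp only [Finset.mem_union, Finset.mem_insert, mem_Kfin] at hx
        have hub : F.anc (Sum.inl u) (bQ (P u)) := hS_b u hu
        rcases hx with ⟨t, rfl⟩ | rfl | hx
        · exact F.trans _ _ _ (hall t) hub
        · exact hub
        · exact hbQ _ _ hx
      have hcard := hsz _ _ hsub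
      rw [Finset.card_union_of_disjoint, Finset.card_insert_of_notMem,
        card_Kfin, card_Qfin] at hcard
      · omega
      · exact inl_not_mem_Qfin
      · apply Finset.disjoint_left.2
        intro x hx hx'
        rw [mem_Kfin] at hx
        obtain ⟨t, rfl⟩ := hx
        simp only [Finset.mem_insert, mem_Kfin, Qfin] at hx'
        rcases hx' with h' | h' | ⟨s, h'⟩
        · exact absurd h' (by simp)
        · exact absurd h' (by simp)
        · simp only [kap, Sum.inr.injEq, Sum.inl.injEq, Prod.mk.injEq] at h'
          exact hij h'.1.symm
  -- both endpoints uncovered is impossible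
  have bothout : ∀ u v, G.Adj u v → ¬ S u → ¬ S v → False := by
    have main : ∀ u v, G.Adj u v → ¬ S u → ¬ S v →
        F.anc (Sum.inl u) (Sum.inl v) → False := by
      intro u v huv hu hv hanc
      have hij : P u ≠ P v := htri u v huv
      have hsub : ∀ x ∈ Kfin V₀ ℓ (P u) ∪
          insert (Sum.inl u) (insert (Sum.inl v) (Kfin V₀ ℓ (P v))),
          F.anc x (Sum.inl v) := by
        intro x hx
        simp only [Finset.mem_union, Finset.mem_insert, mem_Kfin] at hx
        rcases hx with ⟨t, rfl⟩ | rfl | rfl | ⟨t, rfl⟩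
        · exact F.trans _ _ _ (hnS u hu t) hanc
        · exact hanc
        · exact F.refl _
        · exact hnS v hv t
      have hcard := hsz _ _ hsub
      rw [Finset.card_union_of_disjoint, Finset.card_insert_of_notMem,
        Finset.card_insert_of_notMem, card_Kfin, card_Kfin] at hcard
      · omega
      · exact inl_not_mem_Kfin
      · simp only [Finset.mem_insert, inl_not_mem_Kfin, or_false, Sum.inl.injEq]
        exact huv.ne
      · apply Finset.disjoint_left.2
        intro x hx hx'
        rw [mem_Kfin] at hx
        obtain ⟨t, rfl⟩ := hx
        simp only [Finset.mem_insert, mem_Kfin] at hx'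
        rcases hx' with h' | h' | ⟨s, h'⟩
        · exact absurd h' (by simp)
        · exact absurd h' (by simp)
        · simp only [kap, Sum.inr.injEq, Sum.inl.injEq, Prod.mk.injEq] at h'
          exact hij h'.1
    intro u v huv hu hv
    rcases F.adjComparable _ _ (adj_inl_inl.2 huv) with h | h
    · exact main u v huv hu hv h
    · exact main v u huv.symm hv hu h
  -- key per-edge lemma
  have key : ∀ u v, G.Adj u v → ∃ h : V₀, (h = u ∨ h = v) ∧
      F.anc (Sum.inl h) (bQ (P u)) ∧ F.anc (Sum.inl h) (bQ (P v)) := by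
    intro u v huv
    by_cases hu : S u <;> by_cases hv : S v
    · rcases F.adjComparable _ _ (adj_inl_inl.2 huv) with h | h
      · exact ⟨u, Or.inl rfl, hS_b u hu, F.trans _ _ _ h (hS_b v hv)⟩
      · exact ⟨v, Or.inr rfl, F.trans _ _ _ h (hS_b u hu), hS_b v hv⟩
    · exact ⟨u, Or.inl rfl, hS_b u hu, mixed u v huv hu hv⟩
    · exact ⟨v, Or.inr rfl, mixed v u huv.symm hv hu, hS_b v hv⟩
    · exact absurd (bothout u v huv hu hv) not_false
  -- the cover consisting of "doubly low" vertices
  set U : Finset V₀ := Finset.univ.filter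
    (fun h => ∃ i j : Fin 3, i ≠ j ∧ F.anc (Sum.inl h) (bQ i) ∧ F.anc (Sum.inl h) (bQ j))
    with hUdef
  have hUcov : IsVertexCover G ↑U := by
    intro u v huv
    obtain ⟨h, hh, h1, h2⟩ := key u v huv
    have hmem : h ∈ U := by
      rw [hUdef, Finset.mem_filter]
      exact ⟨Finset.mem_univ _, P u, P v, htri u v huv, h1, h2⟩
    rcases hh with rfl | rfl
    · exact Or.inl hmem
    · exact Or.inr hmem
  have hkU : k ≤ U.card := Nat.sInf_le ⟨U, hUcov, rfl⟩
  rcases U.eq_empty_or_nonempty with hU | hU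
  · rw [hU] at hkU
    simp only [Finset.card_empty, Nat.le_zero] at hkU
    have := hsz (bQ 0) (Qfin V₀ ℓ 0) (hbQ 0)
    rw [card_Qfin] at this
    omega
  · have hUtot : ∀ a ∈ U, ∀ b ∈ U,
        F.anc (Sum.inl a) (Sum.inl b) ∨ F.anc (Sum.inl b) (Sum.inl a) := by
      intro a ha b hb
      rw [hUdef, Finset.mem_filter] at ha hb
      obtain ⟨-, i1, j1, hij1, ha1, ha2⟩ := ha
      obtain ⟨-, i2, j2, hij2, hb1, hb2⟩ := hb
      have pig' : ∀ a b c d : Fin 3, a ≠ b → c ≠ d →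
          (a = c ∨ a = d ∨ b = c ∨ b = d) := by decide
      have pig : i1 = i2 ∨ i1 = j2 ∨ j1 = i2 ∨ j1 = j2 := pig' _ _ _ _ hij1 hij2
      rcases pig with rfl | rfl | rfl | rfl
      · exact F.ancTotal _ _ _ ha1 hb1
      · exact F.ancTotal _ _ _ ha1 hb2
      · exact F.ancTotal _ _ _ ha2 hb1
      · exact F.ancTotal _ _ _ ha2 hb2
    obtain ⟨h0, hmem, hbot⟩ := exists_chain_bot
      (fun a b : V₀ => F.anc (Sum.inl a) (Sum.inl b))
      (fun a b c hab hbc => F.trans _ _ _ hab hbc) U hU hUtot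
    rw [hUdef, Finset.mem_filter] at hmem
    obtain ⟨-, i, j, hij, h1, h2⟩ := hmem
    have hsub : ∀ x ∈ U.image (Sum.inl : V₀ → AugV V₀ ℓ) ∪ Qfin V₀ ℓ i,
        F.anc x (bQ i) := by
      intro x hx
      simp only [Finset.mem_union, Finset.mem_image] at hx
      rcases hx with ⟨a, ha, rfl⟩ | hx
      · exact F.trans _ _ _ (hbot a ha) h1
      · exact hbQ _ _ hx
    have hcard := hsz _ _ hsub
    rw [Finset.card_union_of_disjoint, Finset.card_image_of_injective _ Sum.inl_injective,
      card_Qfin] at hcard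
    · omega
    · apply Finset.disjoint_left.2
      intro x hx hx'
      simp only [Finset.mem_image] at hx
      obtain ⟨a, -, rfl⟩ := hx
      exact inl_not_mem_Qfin hx'


/-- The strict-ancestor relation of the explicit elimination forest used for the upper
bound: a path through the cover `S₀` on top (ordered by `f`), below it for each part `i`
the clique path `K_i`, and below that the leaves (uncovered vertices of part `i` and the
apex `z_i`). -/
def sanc (P : V₀ → Fin 3) (S₀ : Finset V₀) (f : V₀ → ℕ) {ℓ : ℕ} :
    AugV V₀ ℓ → AugV V₀ ℓ → Prop
  | Sum.inl u, Sum.inl v => u ∈ S₀ ∧ (v ∈ S₀ → f u < f v)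
  | Sum.inl u, Sum.inr _ => u ∈ S₀
  | Sum.inr (Sum.inl (i, _)), Sum.inl v => v ∉ S₀ ∧ P v = i
  | Sum.inr (Sum.inl (i, s)), Sum.inr (Sum.inl (j, t)) => i = j ∧ s < t
  | Sum.inr (Sum.inl (i, _)), Sum.inr (Sum.inr j) => i = j
  | Sum.inr (Sum.inr _), _ => False

/-- The part of a vertex of the augmented graph. -/
def pt (P : V₀ → Fin 3) {ℓ : ℕ} : AugV V₀ ℓ → Fin 3
  | Sum.inl u => P u
  | Sum.inr (Sum.inl (i, _)) => i
  | Sum.inr (Sum.inr i) => i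

lemma upperBound [Fintype V₀] (G : SimpleGraph V₀) (P : V₀ → Fin 3) (ℓ : ℕ) :
    ∃ F : ElimForest (augGraph G P ℓ), F.depth ≤ vcNum V₀ G + ℓ + 1 := by
  classical
  -- a minimum vertex cover
  have hne : {n | ∃ S : Finset V₀, IsVertexCover G ↑S ∧ S.card = n}.Nonempty :=
    ⟨Finset.univ.card, Finset.univ, fun u v _ => Or.inl (Finset.mem_coe.2 (Finset.mem_univ _)),
      rfl⟩
  obtain ⟨S₀, hcov, hcard⟩ := Nat.sInf_mem hne
  set k := vcNum V₀ G with hk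
  -- an injective enumeration of the vertices
  set f : V₀ → ℕ := fun v => (Fintype.equivFin V₀ v : ℕ) with hf
  have hfinj : Function.Injective f := fun a b h =>
    (Fintype.equivFin V₀).injective (Fin.val_injective h)
  set A : AugV V₀ ℓ → AugV V₀ ℓ → Prop :=
    fun x y => x = y ∨ sanc P S₀ f x y with hA
  -- basic comparabilities
  have comp_inl : ∀ a b : V₀, a ∈ S₀ → b ∈ S₀ →
      A (Sum.inl a) (Sum.inl b) ∨ A (Sum.inl b) (Sum.inl a) := by
    intro a b ha hb
    rcases lt_trichotomy (f a) (f b) with h | h | h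
    · exact Or.inl (Or.inr ⟨ha, fun _ => h⟩)
    · exact Or.inl (Or.inl (congrArg Sum.inl (hfinj h)))
    · exact Or.inr (Or.inr ⟨hb, fun _ => h⟩)
  have comp_kap : ∀ (i : Fin 3) (s t : Fin ℓ),
      A (kap V₀ ℓ i s) (kap V₀ ℓ i t) ∨ A (kap V₀ ℓ i t) (kap V₀ ℓ i s) := by
    intro i s t
    rcases lt_trichotomy s t with h | h | h
    · exact Or.inl (Or.inr ⟨rfl, h⟩)
    · exact Or.inl (Or.inl (by rw [h]))
    · exact Or.inr (Or.inr ⟨rfl, h⟩)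
  refine ⟨⟨A, fun v => Or.inl rfl, ?_, ?_, ?_, ?_⟩, ?_⟩
  · -- antisymm
    intro u v h1 h2
    rcases h1 with rfl | h1
    · rfl
    rcases h2 with rfl | h2
    · rfl
    exfalso
    rcases u with a | (⟨i, si⟩ | i) <;> rcases v with b | (⟨j, sj⟩ | j) <;>
      simp only [sanc] at h1 h2
    · exact lt_asymm (h1.2 h2.1) (h2.2 h1.1)
    · exact h2.1 h1
    · exact h1.1 h2
    · exact lt_asymm h1.2 h2.2
  · -- trans
    intro u v w h1 h2
    rcases h1 with rfl | h1
    · exact h2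
    rcases h2 with rfl | h2
    · exact Or.inr h1
    right
    rcases u with a | (⟨i, si⟩ | i) <;> rcases v with b | (⟨j, sj⟩ | j) <;>
      rcases w with c | (⟨m, sm⟩ | m) <;> simp only [sanc] at h1 h2 ⊢
    · exact ⟨h1.1, fun hc => lt_trans (h1.2 h2.1) (h2.2 hc)⟩
    · exact h1.1
    · exact h1.1
    · exact ⟨h1, fun hc => absurd hc h2.1⟩
    · exact h1
    · exact h1
    · exact absurd h2.1 h1.1
    · exact absurd h2 h1.1
    · exact absurd h2 h1.1
    · exact ⟨h2.1, by rw [h1.1]; exact h2.2⟩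
    · exact ⟨h1.1.trans h2.1, lt_trans h1.2 h2.2⟩
    · exact h1.1.trans h2
  · -- ancTotal
    intro u v w h1 h2
    rcases h1 with rfl | h1
    · exact Or.inr h2
    rcases h2 with rfl | h2
    · exact Or.inl (Or.inr h1)
    rcases w with c | (⟨m, sm⟩ | m) <;>
      rcases u with a | (⟨i, si⟩ | i) <;> rcases v with b | (⟨j, sj⟩ | j) <;>
      simp only [sanc] at h1 h2
    · exact comp_inl a b h1.1 h2.1
    · exact Or.inl (Or.inr h1.1)
    · exact Or.inr (Or.inr h2.1)
    · obtain rfl : i = j := h1.2.symm.trans h2.2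
      exact comp_kap i si sj
    · exact comp_inl a b h1 h2
    · exact Or.inl (Or.inr h1)
    · exact Or.inr (Or.inr h2)
    · obtain rfl : i = j := h1.1.trans h2.1.symm
      exact comp_kap i si sj
    · exact comp_inl a b h1 h2
    · exact Or.inl (Or.inr h1)
    · exact Or.inr (Or.inr h2)
    · obtain rfl : i = j := h1.trans h2.symm
      exact comp_kap i si sj
  · -- adjComparable
    intro u v huv
    rcases u with a | (⟨i, si⟩ | i) <;> rcases v with b | (⟨j, sj⟩ | j)
    · have hadj : G.Adj a b := adj_inl_inl.1 huv
      rcases hcov hadj with ha | hb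
      · by_cases hb' : b ∈ S₀
        · exact comp_inl a b ha hb'
        · exact Or.inl (Or.inr ⟨ha, fun h => absurd h hb'⟩)
      · by_cases ha' : a ∈ S₀
        · exact comp_inl a b ha' hb
        · exact Or.inr (Or.inr ⟨hb, fun h => absurd h ha'⟩)
    · have h : P a = j := adj_inl_kap.1 huv
      by_cases ha : a ∈ S₀
      · exact Or.inl (Or.inr ha)
      · exact Or.inr (Or.inr ⟨ha, h⟩)
    · exfalso
      rcases huv with ⟨-, h | h⟩ <;> exact h
    · have h : P b = i := (adj_inl_kap.1 huv.symm)
      by_cases hb : b ∈ S₀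
      · exact Or.inr (Or.inr hb)
      · exact Or.inl (Or.inr ⟨hb, h⟩)
    · obtain ⟨hij, -⟩ := adj_kap_kap.1 huv
      subst hij
      exact comp_kap i si sj
    · have h : i = j := adj_kap_zet.1 huv
      exact Or.inl (Or.inr h)
    · exfalso
      rcases huv with ⟨-, h | h⟩ <;> exact h
    · have h : j = i := adj_kap_zet.1 huv.symm
      exact Or.inr (Or.inr h)
    · exfalso
      rcases huv with ⟨-, h | h⟩ <;> exact h
  · -- depth bound
    rw [ElimForest.depth]
    apply Finset.sup_le
    intro v _
    have hsub : {u | A u v} ⊆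
        ↑(insert v (S₀.image (Sum.inl : V₀ → AugV V₀ ℓ) ∪ Kfin V₀ ℓ (pt P v))) := by
      intro u hu
      simp only [Set.mem_setOf_eq] at hu
      simp only [Finset.coe_insert, Set.mem_insert_iff, Finset.coe_union,
        Set.mem_union, Finset.coe_image, Set.mem_image, Finset.mem_coe, mem_Kfin]
      rcases hu with rfl | hu
      · exact Or.inl rfl
      right
      rcases u with a | (⟨i, si⟩ | i)
      · rcases v with b | (⟨j, sj⟩ | j)
        · exact Or.inl ⟨a, hu.1, rfl⟩
        · exact Or.inl ⟨a, hu, rfl⟩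
        · exact Or.inl ⟨a, hu, rfl⟩
      · right
        rcases v with b | (⟨j, sj⟩ | j) <;> simp only [sanc] at hu
        · exact ⟨si, by rw [pt, hu.2]⟩
        · exact ⟨si, by rw [pt, hu.1]⟩
        · exact ⟨si, by rw [pt, hu]⟩
      · rcases v with b | (⟨j, sj⟩ | j) <;> simp only [sanc] at hu
    calc {u | A u v}.ncard ≤
        (insert v (S₀.image (Sum.inl : V₀ → AugV V₀ ℓ) ∪ Kfin V₀ ℓ (pt P v))).card := by
          rw [← Set.ncard_coe_finset]
          exact Set.ncard_le_ncard hsub (Set.toFinite _)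
      _ ≤ (S₀.image (Sum.inl : V₀ → AugV V₀ ℓ) ∪ Kfin V₀ ℓ (pt P v)).card + 1 :=
          Finset.card_insert_le _ _
      _ ≤ (S₀.image (Sum.inl : V₀ → AugV V₀ ℓ)).card + (Kfin V₀ ℓ (pt P v)).card + 1 := by
          have := Finset.card_union_le (S₀.image (Sum.inl : V₀ → AugV V₀ ℓ))
            (Kfin V₀ ℓ (pt P v))
          omega
      _ ≤ k + ℓ + 1 := by
          have hcard' : S₀.card = k := hcard
          have h1 : (S₀.image (Sum.inl : V₀ → AugV V₀ ℓ)).card ≤ k := by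
            rw [← hcard']
            exact Finset.card_image_le
          rw [card_Kfin]
          omega

end TDAux

/-- Let `G` be a tripartite graph with nonempty parts (given by `P`) and `ℓ ≥ vc(G)` a
positive integer.  Then the clique-augmented graph `H` satisfies
`td(H) = vc(G) + ℓ + 1`. -/
theorem treedepth_augGraph {V₀ : Type u} [Fintype V₀] (G : SimpleGraph V₀)
    (P : V₀ → Fin 3) (htri : ∀ u v : V₀, G.Adj u v → P u ≠ P v)
    (hne : ∀ i : Fin 3, ∃ v : V₀, P v = i) (ℓ : ℕ) (hl : 1 ≤ ℓ)
    (hvc : vcNum V₀ G ≤ ℓ) :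
    treedepth (AugV V₀ ℓ) (augGraph G P ℓ) = vcNum V₀ G + ℓ + 1 := by
  obtain ⟨F₀, hF₀⟩ := TDAux.upperBound G P ℓ
  have hub : treedepth (AugV V₀ ℓ) (augGraph G P ℓ) ≤ vcNum V₀ G + ℓ + 1 :=
    le_trans (Nat.sInf_le ⟨F₀, rfl⟩) hF₀
  have hne' : {n | ∃ F : ElimForest (augGraph G P ℓ), F.depth = n}.Nonempty :=
    ⟨F₀.depth, F₀, rfl⟩
  obtain ⟨F, hF⟩ := Nat.sInf_mem hne'
  have hlb := TDAux.lowerBound G P ℓ htri hl hvc F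
  rw [hF] at hlb
  exact le_antisymm hub hlb
end

section
/- In the setting of the clique-augmented tripartite graph H (built from tripartite G with parts A, B, C and parameter ℓ ≥ vc(G) by attaching cliques K_A, K_B, K_C of size ℓ and apex vertices z_A, z_B, z_C), the upper bound holds: td(H) ≤ vc(G) + ℓ + 1. -/
open scoped Classical

universe u

namespace AugProof

variable {V₀ : Type u}

def anc' (S : Set V₀) (f : V₀ → ℕ) (P : V₀ → Fin 3) {ℓ : ℕ} :
    AugV V₀ ℓ → AugV V₀ ℓ → Prop
  | Sum.inl a, Sum.inl b => (a ∈ S ∧ b ∈ S ∧ f a ≤ f b) ∨ (a ∈ S ∧ b ∉ S) ∨ a = b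
  | Sum.inl a, Sum.inr _ => a ∈ S
  | Sum.inr (Sum.inl (i, _)), Sum.inl b => b ∉ S ∧ P b = i
  | Sum.inr (Sum.inl (i, p)), Sum.inr (Sum.inl (j, q)) => i = j ∧ (p : ℕ) ≤ q
  | Sum.inr (Sum.inl (i, _)), Sum.inr (Sum.inr j) => i = j
  | Sum.inr (Sum.inr i), Sum.inr (Sum.inr j) => i = j
  | Sum.inr (Sum.inr _), _ => False

set_option maxHeartbeats 2000000 in
noncomputable def forest (G : SimpleGraph V₀) (P : V₀ → Fin 3) (ℓ : ℕ)
    (S : Set V₀) (hS : IsVertexCover G S)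
    (f : V₀ → ℕ) (hf : Function.Injective f) :
    ElimForest (augGraph G P ℓ) where
  anc := anc' S f P
  refl := by
    rintro (a | ⟨i, p⟩ | i) <;> simp [anc']
  antisymm := by
    rintro (a | ⟨i, p⟩ | i) (b | ⟨j, q⟩ | j) h1 h2 <;>
      simp only [anc'] at h1 h2 <;>
      first
        | tauto
        | (rcases h1 with ⟨_, _, h⟩ | ⟨_, h⟩ | h <;>
           rcases h2 with ⟨_, _, h'⟩ | ⟨_, h'⟩ | h' <;>
           first
             | (exact congrArg Sum.inl (hf (le_antisymm h h')))
             | tauto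
             | (exact congrArg Sum.inl h'.symm)
             | (exact congrArg Sum.inl h))
        | (obtain ⟨rfl, h⟩ := h1; obtain ⟨-, h'⟩ := h2;
           have hpq : p = q := Fin.ext (le_antisymm h h'); subst hpq; rfl)
        | (subst h1; rfl)
  trans := by
    rintro (a | ⟨i, p⟩ | i) (b | ⟨j, q⟩ | j) (c | ⟨k, r⟩ | k) h1 h2 <;>
      simp only [anc'] at h1 h2 ⊢ <;>
      first
        | tauto
        | (rcases h1 with ⟨h, _, le1⟩ | ⟨h, hb⟩ | rfl <;>
           rcases h2 with ⟨_, hc, le2⟩ | ⟨_, hc⟩ | rfl <;>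
           first | tauto | (exact Or.inl ⟨h, hc, le1.trans le2⟩))
        | (rcases h1 with ⟨h, _, _⟩ | ⟨h, _⟩ | rfl <;> tauto)
        | (obtain ⟨hb, hPb⟩ := h1;
           rcases h2 with ⟨h, _, _⟩ | ⟨h, _⟩ | rfl <;> tauto)
        | (obtain ⟨rfl, le1⟩ := h1; obtain ⟨rfl, le2⟩ := h2;
           exact ⟨rfl, le1.trans le2⟩)
        | (obtain ⟨rfl, le1⟩ := h1; tauto)
        | (subst h1; tauto)
  ancTotal := by
    rintro (a | ⟨i, p⟩ | i) (b | ⟨j, q⟩ | j) (c | ⟨k, r⟩ | k) h1 h2 <;>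
      simp only [anc'] at h1 h2 ⊢ <;> try tauto
    case inl.inl.inl =>
      rcases h2 with ⟨hb, hc, hle⟩ | ⟨hb, hc⟩ | rfl
      · rcases h1 with ⟨ha, -, -⟩ | ⟨ha, -⟩ | rfl
        · rcases le_total (f a) (f b) with h | h <;> tauto
        · rcases le_total (f a) (f b) with h | h <;> tauto
        · tauto
      · rcases h1 with ⟨ha, -, -⟩ | ⟨ha, -⟩ | rfl
        · rcases le_total (f a) (f b) with h | h <;> tauto
        · rcases le_total (f a) (f b) with h | h <;> tauto
        · tauto
      · tauto
    case inl.inl.inr.inl =>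
      rcases le_total (f a) (f b) with h | h <;> tauto
    case inl.inl.inr.inr =>
      rcases le_total (f a) (f b) with h | h <;> tauto
    case inl.inr.inl.inl =>
      rcases h1 with ⟨ha, _, _⟩ | ⟨ha, _⟩ | rfl <;> tauto
    case inr.inl.inl.inl =>
      rcases h2 with ⟨hb, _, _⟩ | ⟨hb, _⟩ | rfl <;> tauto
    case inr.inl.inr.inl.inl =>
      obtain ⟨-, h⟩ := h1; obtain ⟨-, h'⟩ := h2; cases h.symm.trans h'
      rcases le_total ((p : ℕ)) ((q : ℕ)) with hle | hle <;> tauto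
    case inr.inl.inr.inl.inr.inl =>
      obtain ⟨h, -⟩ := h1; obtain ⟨h', -⟩ := h2; cases h.trans h'.symm
      rcases le_total ((p : ℕ)) ((q : ℕ)) with hle | hle <;> tauto
    case inr.inl.inr.inl.inr.inr =>
      cases h1.trans h2.symm
      rcases le_total ((p : ℕ)) ((q : ℕ)) with hle | hle <;> tauto
    case inr.inl.inr.inr.inr.inr => exact Or.inl (h1.trans h2.symm)
    case inr.inr.inr.inl.inr.inr => exact Or.inr (h2.trans h1.symm)
    case inr.inr.inr.inr.inr.inr => exact Or.inl (h1.trans h2.symm)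
  adjComparable := by
    rintro (a | ⟨i, p⟩ | i) (b | ⟨j, q⟩ | j) hadj <;>
      rw [augGraph, SimpleGraph.fromRel_adj] at hadj <;>
      obtain ⟨hne, hrel⟩ := hadj <;>
      simp only [augRel] at hrel <;>
      simp only [anc'] <;>
      first
        | tauto
        | (have hcov : a ∈ S ∨ b ∈ S := by
             rcases hrel with h | h
             · exact hS h
             · exact (hS h).symm
           by_cases ha : a ∈ S <;> by_cases hb : b ∈ S <;>
             first
               | (rcases le_total (f a) (f b) with hle | hle <;> tauto)
               | tauto)
        | (by_cases ha : a ∈ S <;> tauto)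
        | (by_cases hb : b ∈ S <;> tauto)
        | (have hij : i = j := by tauto
           subst hij
           rcases le_total ((p : ℕ)) ((q : ℕ)) with h | h <;> tauto)



@[simp] theorem forest_anc (G : SimpleGraph V₀) (P : V₀ → Fin 3) (ℓ : ℕ)
    (S : Set V₀) (hS : IsVertexCover G S)
    (f : V₀ → ℕ) (hf : Function.Injective f) :
    (forest G P ℓ S hS f hf).anc = anc' S f P := rfl

end AugProof

/-- Let `G` be a tripartite graph with nonempty parts (given by `P`) and `ℓ ≥ vc(G)` a
positive integer.  Then the clique-augmented graph `H` satisfies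
`td(H) ≤ vc(G) + ℓ + 1`. -/
theorem treedepth_augGraph_le {V₀ : Type u} [Fintype V₀] (G : SimpleGraph V₀)
    (P : V₀ → Fin 3) (htri : ∀ u v : V₀, G.Adj u v → P u ≠ P v)
    (hne : ∀ i : Fin 3, ∃ v : V₀, P v = i) (ℓ : ℕ) (hl : 1 ≤ ℓ)
    (hvc : vcNum V₀ G ≤ ℓ) :
    treedepth (AugV V₀ ℓ) (augGraph G P ℓ) ≤ vcNum V₀ G + ℓ + 1 := by
  classical
  obtain ⟨S, hS, hcard⟩ :
      ∃ S : Finset V₀, IsVertexCover G ↑S ∧ S.card = vcNum V₀ G := by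
    have h : (vcNum V₀ G) ∈ {n | ∃ S : Finset V₀, IsVertexCover G ↑S ∧ S.card = n} :=
      Nat.sInf_mem ⟨(Finset.univ : Finset V₀).card, Finset.univ,
        fun u v _ => Or.inl (by simp), rfl⟩
    exact h
  set f : V₀ → ℕ := fun v => ((Fintype.equivFin V₀) v : ℕ) with hfdef
  have hf : Function.Injective f := fun a b h =>
    (Fintype.equivFin V₀).injective (Fin.val_injective h)
  set F := AugProof.forest G P ℓ (↑S) hS f hf with hFdef
  have h1 : treedepth (AugV V₀ ℓ) (augGraph G P ℓ) ≤ F.depth := Nat.sInf_le ⟨F, rfl⟩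
  refine h1.trans ?_
  rw [ElimForest.depth]
  apply Finset.sup_le
  intro v _
  -- counting lemma
  have hcount : ∀ (w : AugV V₀ ℓ) (i : Fin 3),
      ((Sum.inl '' (↑S : Set V₀)) ∪
       ((fun p : Fin ℓ => (Sum.inr (Sum.inl (i, p)) : AugV V₀ ℓ)) '' Set.univ) ∪
       {w}).ncard ≤ vcNum V₀ G + ℓ + 1 := by
    intro w i
    refine le_trans (Set.ncard_union_le _ _) ?_
    have h2 := Set.ncard_union_le (Sum.inl '' (↑S : Set V₀))
      ((fun p : Fin ℓ => (Sum.inr (Sum.inl (i, p)) : AugV V₀ ℓ)) '' Set.univ)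
    have e1 : ((Sum.inl '' (↑S : Set V₀)) : Set (AugV V₀ ℓ)).ncard = vcNum V₀ G := by
      rw [Set.ncard_image_of_injective _ Sum.inl_injective, Set.ncard_coe_finset, hcard]
    have e2 : ((fun p : Fin ℓ => (Sum.inr (Sum.inl (i, p)) : AugV V₀ ℓ)) ''
        Set.univ).ncard = ℓ := by
      rw [Set.ncard_image_of_injective _ (fun p q h => by simpa using h),
        Set.ncard_univ, Nat.card_eq_fintype_card, Fintype.card_fin]
    have e3 : ({w} : Set (AugV V₀ ℓ)).ncard = 1 := Set.ncard_singleton w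
    omega
  have key : ∀ i : Fin 3, {u | F.anc u v} ⊆
      (Sum.inl '' (↑S : Set V₀)) ∪
      ((fun p : Fin ℓ => (Sum.inr (Sum.inl (i, p)) : AugV V₀ ℓ)) '' Set.univ) ∪
      {v} → {u | F.anc u v}.ncard ≤ vcNum V₀ G + ℓ + 1 := fun i hsub =>
    le_trans (Set.ncard_le_ncard hsub (Set.toFinite _)) (hcount v i)
  rcases v with c | ⟨j, q⟩ | j
  · refine key (P c) ?_
    rintro (a | ⟨i, p⟩ | i) hu <;>
      simp only [hFdef, AugProof.forest_anc, Set.mem_setOf_eq, AugProof.anc'] at hu <;>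
      simp only [Set.mem_union, Set.mem_image, Set.mem_singleton_iff, Set.mem_univ,
        true_and]
    · rcases hu with ⟨ha, -, -⟩ | ⟨ha, -⟩ | rfl
      · exact Or.inl (Or.inl ⟨a, ha, rfl⟩)
      · exact Or.inl (Or.inl ⟨a, ha, rfl⟩)
      · exact Or.inr rfl
    · obtain ⟨-, rfl⟩ := hu
      exact Or.inl (Or.inr ⟨p, rfl⟩)
  · refine key j ?_
    rintro (a | ⟨i, p⟩ | i) hu <;>
      simp only [hFdef, AugProof.forest_anc, Set.mem_setOf_eq, AugProof.anc'] at hu <;>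
      simp only [Set.mem_union, Set.mem_image, Set.mem_singleton_iff, Set.mem_univ,
        true_and]
    · exact Or.inl (Or.inl ⟨a, hu, rfl⟩)
    · obtain ⟨rfl, -⟩ := hu
      exact Or.inl (Or.inr ⟨p, rfl⟩)
  · refine key j ?_
    rintro (a | ⟨i, p⟩ | i) hu <;>
      simp only [hFdef, AugProof.forest_anc, Set.mem_setOf_eq, AugProof.anc'] at hu <;>
      simp only [Set.mem_union, Set.mem_image, Set.mem_singleton_iff, Set.mem_univ,
        true_and]
    · exact Or.inl (Or.inl ⟨a, hu, rfl⟩)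
    · subst hu
      exact Or.inl (Or.inr ⟨p, rfl⟩)
    · subst hu
      exact Or.inr rfl
end

section
/- Let H be the clique-augmented tripartite graph built from tripartite G (parts A, B, C, parameter ℓ ≥ vc(G)), and let F be an elimination forest of H. For X ∈ {A,B,C}, let κ_X be the deepest vertex of K_X in F. If S ⊆ V(H) \ (K_X ∪ {z_X}) consists of ancestors of κ_X in F, then the depth of F is at least |S| + ℓ + 1. -/
open scoped Classical

universe u

/-- In the clique-augmented graph `H`, let `F` be an elimination forest and, for each
part `i`, let `κ i` be the deepest vertex of the clique `K_i` in `F`.  If `S` is a set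
of vertices avoiding `K_i ∪ {z_i}` all of whose elements are ancestors of `κ i`, then
the depth of `F` is at least `|S| + ℓ + 1`. -/
theorem depth_lower_bound_gadget {V₀ : Type u} [Fintype V₀] (G : SimpleGraph V₀)
    (P : V₀ → Fin 3) (htri : ∀ u v : V₀, G.Adj u v → P u ≠ P v)
    (hne : ∀ i : Fin 3, ∃ v : V₀, P v = i) (ℓ : ℕ) (hl : 1 ≤ ℓ)
    (hvc : vcNum V₀ G ≤ ℓ)
    (F : ElimForest (augGraph G P ℓ)) (κ : Fin 3 → AugV V₀ ℓ)
    (hκ : ∀ i : Fin 3, ∃ t : Fin ℓ, κ i = Sum.inr (Sum.inl (i, t)))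
    (hdeep : ∀ (i : Fin 3) (t : Fin ℓ), F.anc (Sum.inr (Sum.inl (i, t))) (κ i))
    (i : Fin 3) (S : Finset (AugV V₀ ℓ))
    (hSavoid : ∀ s ∈ S, (∀ t : Fin ℓ, s ≠ Sum.inr (Sum.inl (i, t))) ∧
      s ≠ Sum.inr (Sum.inr i))
    (hSanc : ∀ s ∈ S, F.anc s (κ i)) :
    S.card + ℓ + 1 ≤ F.depth := by
  classical
  obtain ⟨t₀, hκi⟩ := hκ i
  set z : AugV V₀ ℓ := Sum.inr (Sum.inr i) with hz
  have hadj : (augGraph G P ℓ).Adj (κ i) z := by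
    rw [hκi]
    exact ⟨by simp [hz], Or.inl rfl⟩
  obtain ⟨v, hvS, hvK, hvz⟩ :
      ∃ v, (∀ s ∈ S, F.anc s v) ∧ (∀ t : Fin ℓ,
        F.anc (Sum.inr (Sum.inl (i, t))) v) ∧ F.anc z v := by
    rcases F.adjComparable _ _ hadj with h | h
    · exact ⟨z, fun s hs => F.trans _ _ _ (hSanc s hs) h,
        fun t => F.trans _ _ _ (hdeep i t) h, F.refl z⟩
    · exact ⟨κ i, hSanc, hdeep i, h⟩
  set K : Finset (AugV V₀ ℓ) :=
    Finset.univ.image (fun t : Fin ℓ => (Sum.inr (Sum.inl (i, t)) : AugV V₀ ℓ)) with hK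
  have hKcard : K.card = ℓ := by
    rw [hK, Finset.card_image_of_injective _ (by intro a b hab; simpa using hab)]
    simp
  have hzK : z ∉ K := by simp [hK, hz]
  have hSK : Disjoint S K := by
    rw [Finset.disjoint_left]
    intro s hs hsK
    rw [hK] at hsK
    obtain ⟨t, _, ht⟩ := Finset.mem_image.mp hsK
    exact (hSavoid s hs).1 t ht.symm
  have hzS : z ∉ S := fun h => (hSavoid z h).2 rfl
  set A : Finset (AugV V₀ ℓ) := (S ∪ K) ∪ {z} with hA
  have hAcard : A.card = S.card + ℓ + 1 := by
    rw [hA, Finset.card_union_of_disjoint, Finset.card_union_of_disjoint hSK,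
      hKcard, Finset.card_singleton]
    simp [hzK, hzS]
  have hsub : (↑A : Set (AugV V₀ ℓ)) ⊆ {u | F.anc u v} := by
    intro u hu
    simp only [hA, Finset.coe_union, Set.mem_union, Finset.mem_coe,
      Finset.coe_singleton, Set.mem_singleton_iff] at hu
    rcases hu with (hu | hu) | hu
    · exact hvS u hu
    · rw [hK] at hu
      obtain ⟨t, _, ht⟩ := Finset.mem_image.mp hu
      exact ht ▸ hvK t
    · exact hu ▸ hvz
  have h1 : S.card + ℓ + 1 ≤ ({u | F.anc u v} : Set (AugV V₀ ℓ)).ncard := by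
    rw [← hAcard, ← Set.ncard_coe_finset]
    exact Set.ncard_le_ncard hsub (Set.toFinite _)
  calc S.card + ℓ + 1 ≤ _ := h1
    _ ≤ F.depth := Finset.le_sup (f := fun w : AugV V₀ ℓ => {u | F.anc u w}.ncard) (Finset.mem_univ v)
end

section
/- Let H be the clique-augmented tripartite graph (parts A, B, C, cliques K_A, K_B, K_C of size ℓ ≥ vc(G), apexes z_A, z_B, z_C) and let F be an elimination forest of H of depth at most vc(G) + ℓ. Then no two of the deepest clique vertices κ_A, κ_B, κ_C are in ancestor–descendant relationship in F. -/
open scoped Classical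

universe u

/-- In the clique-augmented graph `H`, if `F` is an elimination forest of depth at most
`vc(G) + ℓ`, then no two of the deepest clique vertices `κ_A, κ_B, κ_C` are in
ancestor--descendant relationship in `F`. -/
theorem no_deepest_vertices_comparable {V₀ : Type u} [Fintype V₀] (G : SimpleGraph V₀)
    (P : V₀ → Fin 3) (htri : ∀ u v : V₀, G.Adj u v → P u ≠ P v)
    (hne : ∀ i : Fin 3, ∃ v : V₀, P v = i) (ℓ : ℕ) (hl : 1 ≤ ℓ)
    (hvc : vcNum V₀ G ≤ ℓ)
    (F : ElimForest (augGraph G P ℓ)) (κ : Fin 3 → AugV V₀ ℓ)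
    (hκ : ∀ i : Fin 3, ∃ t : Fin ℓ, κ i = Sum.inr (Sum.inl (i, t)))
    (hdeep : ∀ (i : Fin 3) (t : Fin ℓ), F.anc (Sum.inr (Sum.inl (i, t))) (κ i))
    (hdepth : F.depth ≤ vcNum V₀ G + ℓ) :
    ∀ i j : Fin 3, i ≠ j → ¬ F.anc (κ i) (κ j) := by
  intro i j hij hanc
  obtain ⟨tj, htj⟩ := hκ j
  -- κ j is adjacent to the apex z_j
  have hadj : (augGraph G P ℓ).Adj (κ j) (Sum.inr (Sum.inr j)) := by
    rw [htj, augGraph, SimpleGraph.fromRel_adj]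
    refine ⟨?_, Or.inl ?_⟩ <;> simp [augRel]
  -- pick x below both κ j and z_j
  obtain ⟨x, hzx, hκjx⟩ : ∃ x, F.anc (Sum.inr (Sum.inr j)) x ∧ F.anc (κ j) x := by
    rcases F.adjComparable _ _ hadj with h | h
    · exact ⟨Sum.inr (Sum.inr j), F.refl _, h⟩
    · exact ⟨κ j, h, F.refl _⟩
  -- the 2ℓ+1 ancestors of x
  set T : Finset (AugV V₀ ℓ) :=
    (Finset.univ.image fun t : Fin ℓ => (Sum.inr (Sum.inl (i, t)) : AugV V₀ ℓ)) ∪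
    (Finset.univ.image fun t : Fin ℓ => (Sum.inr (Sum.inl (j, t)) : AugV V₀ ℓ)) ∪
    {Sum.inr (Sum.inr j)} with hT
  have hsub : (↑T : Set (AugV V₀ ℓ)) ⊆ {u | F.anc u x} := by
    intro u hu
    simp only [hT, Finset.coe_union, Set.mem_union, Finset.coe_image, Set.mem_image,
      Finset.coe_singleton, Set.mem_singleton_iff] at hu
    rcases hu with (⟨t, _, rfl⟩ | ⟨t, _, rfl⟩) | rfl
    · exact F.trans _ _ _ (F.trans _ _ _ (hdeep i t) hanc) hκjx
    · exact F.trans _ _ _ (hdeep j t) hκjx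
    · exact hzx
  have hcard : T.card = 2 * ℓ + 1 := by
    rw [hT]
    rw [Finset.card_union_of_disjoint, Finset.card_union_of_disjoint]
    · rw [Finset.card_image_of_injective, Finset.card_image_of_injective,
        Finset.card_singleton, Finset.card_univ, Fintype.card_fin]
      · ring
      · intro a b hab
        simpa using hab
      · intro a b hab
        simpa using hab
    · rw [Finset.disjoint_left]
      rintro u hu hv
      simp only [Finset.mem_image, Finset.mem_univ, true_and] at hu hv
      obtain ⟨a, rfl⟩ := hu
      obtain ⟨b, hb⟩ := hv
      simp only [Sum.inr.injEq, Sum.inl.injEq, Prod.mk.injEq] at hb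
      exact hij hb.1.symm
    · rw [Finset.disjoint_left]
      rintro u hu hv
      simp only [Finset.mem_union, Finset.mem_image, Finset.mem_univ, true_and,
        Finset.mem_singleton] at hu hv
      rcases hu with ⟨a, rfl⟩ | ⟨a, rfl⟩ <;> simp at hv
  have hle : T.card ≤ F.depth := by
    calc T.card = (↑T : Set (AugV V₀ ℓ)).ncard := (Set.ncard_coe_finset T).symm
    _ ≤ {u | F.anc u x}.ncard := Set.ncard_le_ncard hsub (Set.toFinite _)
    _ ≤ F.depth := Finset.le_sup (f := fun v : AugV V₀ ℓ => {u | F.anc u v}.ncard) (Finset.mem_univ x)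
  rw [hcard] at hle
  omega
end

section
/- Let H be the clique-augmented tripartite graph and F an elimination forest of H of depth at most vc(G) + ℓ. For distinct parts X, Y ∈ {A,B,C} and any edge v_X v_Y of G with v_X ∈ X, v_Y ∈ Y, one of v_X, v_Y is an ancestor in F of both κ_X and κ_Y. -/
open scoped Classical

universe u

/-- In the clique-augmented graph `H`, if `F` is an elimination forest of depth at most
`vc(G) + ℓ`, then for any edge `v_X v_Y` of `G` between two distinct parts `i ≠ j`,
one of `v_X, v_Y` is an ancestor in `F` of both `κ i` and `κ j`. -/
theorem edge_ancestor_of_deepest {V₀ : Type u} [Fintype V₀] (G : SimpleGraph V₀)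
    (P : V₀ → Fin 3) (htri : ∀ u v : V₀, G.Adj u v → P u ≠ P v)
    (hne : ∀ i : Fin 3, ∃ v : V₀, P v = i) (ℓ : ℕ) (hl : 1 ≤ ℓ)
    (hvc : vcNum V₀ G ≤ ℓ)
    (F : ElimForest (augGraph G P ℓ)) (κ : Fin 3 → AugV V₀ ℓ)
    (hκ : ∀ i : Fin 3, ∃ t : Fin ℓ, κ i = Sum.inr (Sum.inl (i, t)))
    (hdeep : ∀ (i : Fin 3) (t : Fin ℓ), F.anc (Sum.inr (Sum.inl (i, t))) (κ i))
    (hdepth : F.depth ≤ vcNum V₀ G + ℓ)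
    (i j : Fin 3) (hij : i ≠ j) (vX vY : V₀) (hvX : P vX = i) (hvY : P vY = j)
    (hadj : G.Adj vX vY) :
    (F.anc (Sum.inl vX) (κ i) ∧ F.anc (Sum.inl vX) (κ j)) ∨
      (F.anc (Sum.inl vY) (κ i) ∧ F.anc (Sum.inl vY) (κ j)) := by

  classical
  -- Key counting lemma: no vertex `w` can have all of `K_i`, all of `K_j`,
  -- and some original vertex among its ancestors.
  have key : ∀ (w : AugV V₀ ℓ) (x : V₀),
      (∀ t : Fin ℓ, F.anc (Sum.inr (Sum.inl (i, t))) w) →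
      (∀ t : Fin ℓ, F.anc (Sum.inr (Sum.inl (j, t))) w) →
      F.anc (Sum.inl x) w → False := by
    intro w x hKi hKj hx
    set T : Finset (AugV V₀ ℓ) :=
      ((({i, j} : Finset (Fin 3)) ×ˢ (Finset.univ : Finset (Fin ℓ))).image
        (fun p => (Sum.inr (Sum.inl p) : AugV V₀ ℓ))) ∪ {Sum.inl x} with hT
    have hsub : ↑T ⊆ {u : AugV V₀ ℓ | F.anc u w} := by
      intro u hu
      simp only [hT, Finset.coe_union, Set.mem_union, Finset.coe_image,
        Set.mem_image, Finset.mem_coe, Finset.mem_product, Finset.mem_insert,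
        Finset.mem_singleton, Finset.mem_univ, and_true, Finset.coe_singleton,
        Set.mem_singleton_iff] at hu
      rcases hu with ⟨⟨a, b⟩, ha, rfl⟩ | rfl
      · rcases ha with rfl | rfl
        · exact hKi b
        · exact hKj b
      · exact hx
    have hdisj : Disjoint
        ((({i, j} : Finset (Fin 3)) ×ˢ (Finset.univ : Finset (Fin ℓ))).image
          (fun p => (Sum.inr (Sum.inl p) : AugV V₀ ℓ)))
        ({Sum.inl x} : Finset (AugV V₀ ℓ)) := by
      simp [Finset.disjoint_right]
    have hinj : Function.Injective
        (fun p : Fin 3 × Fin ℓ => (Sum.inr (Sum.inl p) : AugV V₀ ℓ)) := by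
      intro a b h
      simpa using h
    have hcard : T.card = 2 * ℓ + 1 := by
      rw [hT, Finset.card_union_of_disjoint hdisj,
        Finset.card_image_of_injective _ hinj, Finset.card_product,
        Finset.card_pair hij, Finset.card_univ, Fintype.card_fin,
        Finset.card_singleton]
    have h1 : T.card ≤ ({u : AugV V₀ ℓ | F.anc u w}).ncard := by
      have := Set.ncard_le_ncard hsub (Set.toFinite _)
      simpa [Set.ncard_coe_finset] using this
    have h2 : ({u : AugV V₀ ℓ | F.anc u w}).ncard ≤ F.depth :=
      Finset.le_sup (f := fun v : AugV V₀ ℓ => ({u | F.anc u v}).ncard)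
        (Finset.mem_univ w)
    omega
  -- comparabilities
  have adjXκ : (augGraph G P ℓ).Adj (Sum.inl vX) (κ i) := by
    obtain ⟨t, ht⟩ := hκ i
    rw [ht, augGraph, SimpleGraph.fromRel_adj]
    exact ⟨by simp, Or.inl hvX⟩
  have adjYκ : (augGraph G P ℓ).Adj (Sum.inl vY) (κ j) := by
    obtain ⟨t, ht⟩ := hκ j
    rw [ht, augGraph, SimpleGraph.fromRel_adj]
    exact ⟨by simp, Or.inl hvY⟩
  have adjXY : (augGraph G P ℓ).Adj (Sum.inl vX) (Sum.inl vY) := by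
    rw [augGraph, SimpleGraph.fromRel_adj]
    exact ⟨by simp [hadj.ne], Or.inl hadj⟩
  have cXκ := F.adjComparable _ _ adjXκ
  have cYκ := F.adjComparable _ _ adjYκ
  have cXY := F.adjComparable _ _ adjXY
  rcases cXκ with hX | hX <;> rcases cYκ with hY | hY
  · -- vX above κ i, vY above κ j
    rcases cXY with h | h
    · exact Or.inl ⟨hX, F.trans _ _ _ h hY⟩
    · exact Or.inr ⟨F.trans _ _ _ h hX, hY⟩
  · -- vX above κ i, vY below κ j
    rcases cXY with h | h
    · rcases F.ancTotal (Sum.inl vX) (κ j) (Sum.inl vY) h hY with h2 | h2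
      · exact Or.inl ⟨hX, h2⟩
      · exact (key (κ i) vX (hdeep i)
          (fun t => F.trans _ _ _ (hdeep j t) (F.trans _ _ _ h2 hX)) hX).elim
    · exact (key (κ i) vX (hdeep i)
        (fun t => F.trans _ _ _ (hdeep j t)
          (F.trans _ _ _ hY (F.trans _ _ _ h hX))) hX).elim
  · -- vX below κ i, vY above κ j
    rcases cXY with h | h
    · exact (key (κ j) vY
        (fun t => F.trans _ _ _ (hdeep i t)
          (F.trans _ _ _ hX (F.trans _ _ _ h hY))) (hdeep j) hY).elim
    · rcases F.ancTotal (Sum.inl vY) (κ i) (Sum.inl vX) h hX with h2 | h2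
      · exact Or.inr ⟨h2, hY⟩
      · exact (key (κ j) vY
          (fun t => F.trans _ _ _ (hdeep i t) (F.trans _ _ _ h2 hY))
          (hdeep j) hY).elim
  · -- both below
    rcases cXY with h | h
    · exact (key (Sum.inl vY) vX
        (fun t => F.trans _ _ _ (hdeep i t) (F.trans _ _ _ hX h))
        (fun t => F.trans _ _ _ (hdeep j t) hY) h).elim
    · exact (key (Sum.inl vX) vY
        (fun t => F.trans _ _ _ (hdeep i t) hX)
        (fun t => F.trans _ _ _ (hdeep j t) (F.trans _ _ _ hY h)) h).elim
end
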